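/- arXiv:2507.08346 — 3 statements merged into one kernel-verified Lean document; each statement's English description precedes it below -/
import Mathlib

section
/- Let F : ℕ → Set ℕ be such that every F(n) is infinite and F is ⊆-decreasing (F(n+1) ⊆ F(n) for all n). Then there exists f : ℕ → ℕ such that for every strictly increasing g : ℕ → ℕ with ¬(g ≤* f), the set F^g = ⋃_{n ∈ ℕ} (F(n) ∩ {k ∈ ℕ : k < g(n)}) is infinite. -/
/-- If `F : ℕ → Set ℕ` is `⊆`-decreasing with every `F n` infinite, then
there is `f : ℕ → ℕ` such that for every strictly increasing `g` with `¬ (g ≤* f)`,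
the set `F^g = ⋃ n, F n ∩ {k | k < g n}` is infinite. -/
theorem exists_control_of_decreasing (F : ℕ → Set ℕ)
    (hinf : ∀ n, (F n).Infinite) (hdec : ∀ n, F (n + 1) ⊆ F n) :
    ∃ f : ℕ → ℕ, ∀ g : ℕ → ℕ, StrictMono g →
      ¬ (∀ᶠ n in Filter.atTop, g n ≤ f n) →
      (⋃ n, F n ∩ {k : ℕ | k < g n}).Infinite := by
  choose s hs hcard using fun n => (hinf n).exists_subset_card_eq n
  refine ⟨fun n => (s n).sup id + 1, fun g hg hng => ?_⟩
  rw [Filter.not_eventually] at hng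
  intro hfin
  obtain ⟨n, hn, hgn⟩ := (hng.and_eventually (Filter.eventually_ge_atTop
    (hfin.toFinset.card + 1))).exists
  push_neg at hn
  have hsub : ↑(s n) ⊆ (⋃ m, F m ∩ {k : ℕ | k < g m}) := by
    intro k hk
    exact Set.mem_iUnion.2 ⟨n, hs n hk,
      lt_of_le_of_lt (le_trans (Finset.le_sup (f := id) hk) (Nat.le_succ _)) hn⟩
  have : (s n).card ≤ hfin.toFinset.card :=
    Finset.card_le_card (fun k hk => hfin.mem_toFinset.2 (hsub hk))
  have := hcard n
  omega
end

section
/- For every positive natural number n, the set of n-tuples (X₁, …, Xₙ) of subsets of fin such that 𝒞(X₁) ∪ … ∪ 𝒞(Xₙ) is centered is a Gδ subset of 𝒫(fin)ⁿ. -/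
/-- A family of subsets of `ℕ` is centered if every finite subfamily has infinite
intersection. -/
def Centered (𝒜 : Set (Set ℕ)) : Prop :=
  ∀ 𝒮 ⊆ 𝒜, 𝒮.Finite → (⋂₀ 𝒮).Infinite

/-- The type of nonempty finite subsets of `ℕ`. -/
abbrev Tt := {t : Finset ℕ // t.Nonempty}

/-- The space of "choice systems": for each pair `(i,j)` a function picking an
element of each nonempty finite set. This is a compact space. -/
abbrev GS (n k : ℕ) := (Fin n × Fin (k+1)) → ∀ t : Tt, {m : ℕ // m ∈ t.1}

/-- The "bad" set at level `(k, N)`: pairs `(X, g)` such that the intersection of the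
images `g (i,j) '' (X i)` is contained in `[0, N]`. -/
def CC (n k N : ℕ) : Set ((Fin n → (Tt → Bool)) × GS n k) :=
  {p | ∀ m, N < m → ∃ ij : Fin n × Fin (k+1),
    ∀ t : Tt, p.1 ij.1 t = true → (p.2 ij t : ℕ) ≠ m}

lemma isClosed_CC (n k N : ℕ) : IsClosed (CC n k N) := by
  have : CC n k N = ⋂ m : ℕ, ⋂ (_ : N < m), ⋃ ij : Fin n × Fin (k+1),
      ⋂ t : Tt, {p : (Fin n → (Tt → Bool)) × GS n k |
        p.1 ij.1 t = true → (p.2 ij t : ℕ) ≠ m} := by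
    ext p; simp [CC]
  rw [this]
  refine isClosed_iInter fun m => isClosed_iInter fun _ =>
    isClosed_iUnion_of_finite fun ij => isClosed_iInter fun t => ?_
  have hc : Continuous fun p : (Fin n → (Tt → Bool)) × GS n k =>
      ((p.1 ij.1 t, p.2 ij t) : Bool × {m : ℕ // m ∈ t.1}) :=
    Continuous.prodMk ((continuous_apply t).comp ((continuous_apply ij.1).comp continuous_fst))
      ((continuous_apply t).comp ((continuous_apply ij).comp continuous_snd))
  exact IsClosed.preimage hc
    (isClosed_discrete {q : Bool × {m' : ℕ // m' ∈ t.1} | q.1 = true → (q.2 : ℕ) ≠ m})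

/-- For every positive `n`, the set of `n`-tuples `(X₁, …, Xₙ)` of subsets
of `fin` (the nonempty finite subsets of `ℕ`, subsets of which are identified with their
characteristic functions) such that `𝒞(X₁) ∪ … ∪ 𝒞(Xₙ)` is centered, is a `Gδ` subset of
`𝒫(fin)ⁿ`. Here `𝒞(X) = {A ⊆ ℕ : ∀ s ∈ X, A ∩ s ≠ ∅}`. -/
theorem isGδ_centered_C (n : ℕ) (hn : 0 < n) :
    IsGδ {X : Fin n → ({t : Finset ℕ // t.Nonempty} → Bool) |
      Centered (⋃ i : Fin n,
        {A : Set ℕ | ∀ t : {t : Finset ℕ // t.Nonempty},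
          X i t = true → (A ∩ ↑t.1).Nonempty})} := by
  have hset : {X : Fin n → ({t : Finset ℕ // t.Nonempty} → Bool) |
      Centered (⋃ i : Fin n,
        {A : Set ℕ | ∀ t : {t : Finset ℕ // t.Nonempty},
          X i t = true → (A ∩ ↑t.1).Nonempty})}
      = ⋂ p : ℕ × ℕ, (Prod.fst '' CC n p.1 p.2)ᶜ := by
    ext X
    simp only [Set.mem_setOf_eq, Set.mem_iInter, Set.mem_compl_iff, Prod.forall]
    constructor
    · -- Centered → not bad at any level
      rintro hC k N ⟨⟨X', g⟩, hbad, rfl⟩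
      set A : Fin n × Fin (k+1) → Set ℕ :=
        fun ij => (fun t : Tt => (g ij t : ℕ)) '' {t : Tt | X' ij.1 t = true} with hA
      have h1 : Set.range A ⊆ ⋃ i : Fin n,
          {B : Set ℕ | ∀ t : Tt, X' i t = true → (B ∩ ↑t.1).Nonempty} := by
        rintro _ ⟨ij, rfl⟩
        refine Set.mem_iUnion.2 ⟨ij.1, fun t ht => ⟨g ij t, ⟨t, ht, rfl⟩, ?_⟩⟩
        exact Finset.mem_coe.2 (g ij t).2
      have hinf := hC (Set.range A) h1 (Set.finite_range A)
      obtain ⟨m, hm𝒮, hNm⟩ := hinf.exists_gt N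
      obtain ⟨ij, hij⟩ := hbad m hNm
      obtain ⟨t, ht, hgt⟩ := hm𝒮 (A ij) ⟨ij, rfl⟩
      exact hij t ht hgt
    · -- not bad at every level → Centered
      intro h 𝒮 h𝒮 hfin
      by_contra hni
      rw [Set.not_infinite] at hni
      obtain ⟨N, hN⟩ := hni.bddAbove
      set l : List (Set ℕ) := hfin.toFinset.toList with hldef
      have hl : ∀ B, B ∈ 𝒮 ↔ B ∈ l := fun B => by
        rw [hldef, Finset.mem_toList, Set.Finite.mem_toFinset]
      set k := l.length with hk
      set e : ℕ → Set ℕ := fun j => l.getD j Set.univ with he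
      classical
      set g : GS n k := fun ij t =>
        if hne : (e ij.2 ∩ ↑t.1).Nonempty then
          ⟨hne.choose, Finset.mem_coe.1 hne.choose_spec.2⟩
        else ⟨t.2.choose, t.2.choose_spec⟩ with hg
      refine h k N ⟨(X, g), ?_, rfl⟩
      intro m hNm
      have hm' : m ∉ ⋂₀ 𝒮 := fun hmem => absurd (hN hmem) (not_le.2 hNm)
      rw [Set.mem_sInter] at hm'
      push_neg at hm'
      obtain ⟨B, hB𝒮, hmB⟩ := hm'
      obtain ⟨i, hBi⟩ : ∃ i : Fin n, ∀ t : Tt, X i t = true → (B ∩ ↑t.1).Nonempty := by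
        have := h𝒮 hB𝒮
        rw [Set.mem_iUnion] at this
        exact this
      obtain ⟨j, hjlt, hje⟩ := List.mem_iff_getElem.1 ((hl B).1 hB𝒮)
      refine ⟨(i, ⟨j, Nat.lt_succ_of_lt hjlt⟩), fun t ht => ?_⟩
      have hBe : e j = B := by rw [he]; simp only [List.getD_eq_getElem l Set.univ hjlt, hje]
      have hne : (e j ∩ ↑t.1).Nonempty := hBe ▸ hBi t ht
      have hmem : (g (i, ⟨j, Nat.lt_succ_of_lt hjlt⟩) t : ℕ) ∈ e j := by
        rw [hg]
        simp only [dif_pos hne]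
        exact hne.choose_spec.1
      intro hEq
      rw [hBe, hEq] at hmem
      exact hmB hmem
  rw [hset]
  exact IsGδ.iInter fun p =>
    ((isClosedMap_fst_of_compactSpace _ (isClosed_CC n p.1 p.2)).isOpen_compl).isGδ
end

section
/- Let 𝒟 ⊆ 𝒫(ℕ) be a compact set, n ∈ ℕ, and for each i ≤ n let Fᵢ : ℕ → 𝒫(fin) be such that the family 𝒟 ∪ ⋃{𝒞(Fᵢ(k)) : i ≤ n, k ∈ ℕ} is centered. Then there exists h : ℕ → ℕ such that for every strictly increasing g : ℕ → ℕ with ¬(g ≤* h), the family 𝒟 ∪ 𝒞(F₀^g) ∪ … ∪ 𝒞(Fₙ^g) is centered. -/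
/-- A family of subsets of `ℕ` (identified with their characteristic functions in the
Cantor space `ℕ → Bool`) is centered if every finite subfamily has infinite
intersection. -/
def CenteredB (𝒜 : Set (ℕ → Bool)) : Prop :=
  ∀ 𝒮 ⊆ 𝒜, 𝒮.Finite → {k : ℕ | ∀ A ∈ 𝒮, A k = true}.Infinite

/-- For `X ⊆ fin`, `𝒞(X) = {A ⊆ ℕ : ∀ s ∈ X, A ∩ s ≠ ∅}`, as a set of characteristic
functions. -/
def CB (X : Set (Finset ℕ)) : Set (ℕ → Bool) :=
  {A : ℕ → Bool | ∀ s ∈ X, ∃ k ∈ s, A k = true}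

lemma key_lemma (D : Set (ℕ → Bool)) (hD : IsCompact D) {n : ℕ}
    (F : Fin (n + 1) → ℕ → Set (Finset ℕ))
    (hcent : CenteredB (D ∪ ⋃ i : Fin (n + 1), ⋃ k : ℕ, CB (F i k)))
    (k p q N : ℕ) (ι : Fin q → Fin (n + 1)) :
    ∃ M : ℕ, ∀ (Dt : Fin p → (ℕ → Bool)), (∀ t, Dt t ∈ D) →
      ∀ (A : Fin q → (ℕ → Bool)),
      (∀ j, ∀ s ∈ F (ι j) k, (∀ m ∈ s, m < M) → ∃ m ∈ s, A j m = true) →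
      ∃ m, N ≤ m ∧ (∀ t, Dt t m = true) ∧ (∀ j, A j m = true) := by
  by_contra hM
  push_neg at hM
  choose Dt hDt A hA hbad using hM
  set Y := (Fin p → (ℕ → Bool)) × (Fin q → (ℕ → Bool))
  set x : ℕ → Y := fun M => (Dt M, A M) with hx
  set U : Ultrafilter ℕ := Ultrafilter.of Filter.atTop with hUdef
  have hU : (U : Filter ℕ) ≤ Filter.atTop := Ultrafilter.of_le _
  obtain ⟨y, -, hy⟩ := (isCompact_univ (X := Y)).ultrafilter_le_nhds (U.map x)
    (by simp)
  have hy' : Filter.Tendsto x U (nhds y) := by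
    rwa [Filter.Tendsto, ← Ultrafilter.coe_map]
  have hyD : ∀ t, y.1 t ∈ D := by
    intro t
    have hc : IsClosed {z : Y | z.1 t ∈ D} :=
      hD.isClosed.preimage ((continuous_apply t).comp continuous_fst)
    exact hc.mem_of_tendsto hy' (Filter.Eventually.of_forall (fun M => hDt M t))
  have hyA : ∀ j, y.2 j ∈ CB (F (ι j) k) := by
    intro j s hs
    have hc : IsClosed {z : Y | ∃ m ∈ s, z.2 j m = true} := by
      have he : {z : Y | ∃ m ∈ s, z.2 j m = true}
          = ⋃ m ∈ (s : Set ℕ), {z : Y | z.2 j m = true} := by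
        ext z; simp
      rw [he]
      refine s.finite_toSet.isClosed_biUnion (fun m _ => ?_)
      have : IsClosed ((fun z : Y => z.2 j m) ⁻¹' {true}) :=
        (isClosed_discrete _).preimage
          ((continuous_apply m).comp ((continuous_apply j).comp continuous_snd))
      simpa [Set.preimage, Set.mem_singleton_iff] using this
    have hev : ∀ᶠ M in (U : Filter ℕ), x M ∈ {z : Y | ∃ m ∈ s, z.2 j m = true} := by
      refine hU (Filter.eventually_atTop.mpr ⟨(s.sup id) + 1, fun M hM' => ?_⟩)
      exact hA M j s hs (fun m hm => lt_of_le_of_lt (Finset.le_sup (f := id) hm) hM')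
    exact hc.mem_of_tendsto hy' hev
  have hyBad : ∀ m, N ≤ m →
      ¬ ((∀ t, y.1 t m = true) ∧ (∀ j, y.2 j m = true)) := by
    intro m hm
    have hop : IsOpen {z : Y | (∀ t, z.1 t m = true) ∧ (∀ j, z.2 j m = true)} := by
      have h1 : {z : Y | (∀ t, z.1 t m = true) ∧ (∀ j, z.2 j m = true)}
          = (⋂ t, {z : Y | z.1 t m = true}) ∩ ⋂ j, {z : Y | z.2 j m = true} := by
        ext z; simp
      rw [h1]
      refine IsOpen.inter (isOpen_iInter_of_finite fun t => ?_)
        (isOpen_iInter_of_finite fun j => ?_)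
      · have : IsOpen ((fun z : Y => z.1 t m) ⁻¹' {true}) :=
          (isOpen_discrete _).preimage
            ((continuous_apply m).comp ((continuous_apply t).comp continuous_fst))
        simpa [Set.preimage, Set.mem_singleton_iff] using this
      · have : IsOpen ((fun z : Y => z.2 j m) ⁻¹' {true}) :=
          (isOpen_discrete _).preimage
            ((continuous_apply m).comp ((continuous_apply j).comp continuous_snd))
        simpa [Set.preimage, Set.mem_singleton_iff] using this
    have hc : IsClosed {z : Y | ¬ ((∀ t, z.1 t m = true) ∧ (∀ j, z.2 j m = true))} := by
      rw [show {z : Y | ¬ ((∀ t, z.1 t m = true) ∧ (∀ j, z.2 j m = true))}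
        = {z : Y | (∀ t, z.1 t m = true) ∧ (∀ j, z.2 j m = true)}ᶜ from rfl]
      exact hop.isClosed_compl
    refine hc.mem_of_tendsto hy' (Filter.Eventually.of_forall (fun M => ?_))
    intro hcontra
    obtain ⟨j, hj⟩ := hbad M m hm hcontra.1
    exact hj (hcontra.2 j)
  -- contradiction with hcent
  have hsub : (Set.range y.1 ∪ Set.range y.2)
      ⊆ D ∪ ⋃ i : Fin (n + 1), ⋃ k' : ℕ, CB (F i k') := by
    rintro B (⟨t, rfl⟩ | ⟨j, rfl⟩)
    · exact Or.inl (hyD t)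
    · refine Or.inr ?_
      exact Set.mem_iUnion.mpr ⟨ι j, Set.mem_iUnion.mpr ⟨k, hyA j⟩⟩
  have hinf := hcent _ hsub ((Set.finite_range _).union (Set.finite_range _))
  obtain ⟨m, hm, hmN⟩ := hinf.exists_gt N
  exact hyBad m (le_of_lt hmN)
    ⟨fun t => hm _ (Or.inl ⟨t, rfl⟩), fun j => hm _ (Or.inr ⟨j, rfl⟩)⟩

/-- Let `𝒟 ⊆ 𝒫(ℕ)` be compact, and for each `i ≤ n` let
`Fᵢ : ℕ → 𝒫(fin)` be such that `𝒟 ∪ ⋃ {𝒞(Fᵢ(k)) : i ≤ n, k ∈ ℕ}` is centered. Then there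
is `h : ℕ → ℕ` such that for every strictly increasing `g` with `¬ (g ≤* h)`, the family
`𝒟 ∪ 𝒞(F₀^g) ∪ … ∪ 𝒞(Fₙ^g)` is centered, where
`F^g = ⋃ₖ {s ∈ F(k) : s ⊆ {0, …, g(k) − 1}}`. -/
theorem exists_control_centered (D : Set (ℕ → Bool)) (hD : IsCompact D) (n : ℕ)
    (F : Fin (n + 1) → ℕ → Set (Finset ℕ))
    (hfin : ∀ i k, ∀ s ∈ F i k, s.Nonempty)
    (hcent : CenteredB (D ∪ ⋃ i : Fin (n + 1), ⋃ k : ℕ, CB (F i k))) :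
    ∃ h : ℕ → ℕ, ∀ g : ℕ → ℕ, StrictMono g →
      ¬ (∀ᶠ m in Filter.atTop, g m ≤ h m) →
      CenteredB (D ∪ ⋃ i : Fin (n + 1),
        CB (⋃ k : ℕ, {s ∈ F i k | ∀ m ∈ s, m < g k})) := by
  classical
  choose M hM using key_lemma D hD F hcent
  refine ⟨fun k => (Finset.range (k + 1)).sup fun p => (Finset.range (k + 1)).sup
    fun q => (Finset.range (k + 1)).sup fun N =>
      Finset.univ.sup fun ι : Fin q → Fin (n + 1) => M k p q N ι, ?_⟩
  intro g hgmono hng 𝒮 h𝒮sub h𝒮fin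
  set h : ℕ → ℕ := fun k => (Finset.range (k + 1)).sup fun p => (Finset.range (k + 1)).sup
    fun q => (Finset.range (k + 1)).sup fun N =>
      Finset.univ.sup fun ι : Fin q → Fin (n + 1) => M k p q N ι with hh
  set T := h𝒮fin.toFinset with hT
  set T₁ := T.filter (· ∈ D) with hT₁
  set T₂ := T.filter (· ∉ D) with hT₂
  set p := T₁.card
  set q := T₂.card
  set Dt : Fin p → (ℕ → Bool) := fun t => (T₁.equivFin.symm t : { x // x ∈ T₁ }).1 with hDtdef
  have hDt : ∀ t, Dt t ∈ D := by
    intro t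
    have := (T₁.equivFin.symm t).2
    simp only [hT₁, Finset.mem_filter] at this
    exact this.2
  set A : Fin q → (ℕ → Bool) := fun j => (T₂.equivFin.symm j : { x // x ∈ T₂ }).1 with hAdef
  have hA𝒮 : ∀ j, A j ∈ 𝒮 ∧ A j ∉ D := by
    intro j
    have := (T₂.equivFin.symm j).2
    simp only [hT₂, Finset.mem_filter] at this
    exact ⟨(h𝒮fin.mem_toFinset).1 this.1, this.2⟩
  have hAcb : ∀ j, ∃ i : Fin (n + 1),
      A j ∈ CB (⋃ k : ℕ, {s ∈ F i k | ∀ m ∈ s, m < g k}) := by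
    intro j
    rcases h𝒮sub (hA𝒮 j).1 with hd | hu
    · exact absurd hd (hA𝒮 j).2
    · exact Set.mem_iUnion.mp hu
  choose ι hι using hAcb
  refine Set.infinite_of_forall_exists_gt ?_
  intro N
  have hfreq : ∃ᶠ m in Filter.atTop, h m < g m := by
    rw [Filter.not_eventually] at hng
    exact hng.mono (fun m hm => lt_of_not_ge hm)
  obtain ⟨k, hk, hkg⟩ := Filter.frequently_atTop.mp hfreq (max (max p q) (N + 1))
  have hpk : p ≤ k := le_trans (le_trans (le_max_left _ _) (le_max_left _ _)) hk
  have hqk : q ≤ k := le_trans (le_trans (le_max_right _ _) (le_max_left _ _)) hk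
  have hNk : N + 1 ≤ k := le_trans (le_max_right _ _) hk
  have hMle : M k p q (N + 1) ι ≤ h k := by
    calc M k p q (N + 1) ι
        ≤ Finset.univ.sup (fun ι' : Fin q → Fin (n + 1) => M k p q (N + 1) ι') :=
          Finset.le_sup (Finset.mem_univ ι)
      _ ≤ (Finset.range (k + 1)).sup (fun N' =>
            Finset.univ.sup fun ι' : Fin q → Fin (n + 1) => M k p q N' ι') :=
          Finset.le_sup (f := fun N' =>
            Finset.univ.sup fun ι' : Fin q → Fin (n + 1) => M k p q N' ι')
            (Finset.mem_range.mpr (Nat.lt_succ_of_le hNk))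
      _ ≤ (Finset.range (k + 1)).sup (fun q' => (Finset.range (k + 1)).sup fun N' =>
            Finset.univ.sup fun ι' : Fin q' → Fin (n + 1) => M k p q' N' ι') :=
          Finset.le_sup (f := fun q' => (Finset.range (k + 1)).sup fun N' =>
            Finset.univ.sup fun ι' : Fin q' → Fin (n + 1) => M k p q' N' ι')
            (Finset.mem_range.mpr (Nat.lt_succ_of_le hqk))
      _ ≤ h k := Finset.le_sup (f := fun p' => (Finset.range (k + 1)).sup
            fun q' => (Finset.range (k + 1)).sup fun N' =>
            Finset.univ.sup fun ι' : Fin q' → Fin (n + 1) => M k p' q' N' ι')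
            (Finset.mem_range.mpr (Nat.lt_succ_of_le hpk))
  have hMg : M k p q (N + 1) ι < g k := lt_of_le_of_lt hMle hkg
  have hhit : ∀ j, ∀ s ∈ F (ι j) k, (∀ m ∈ s, m < M k p q (N + 1) ι) →
      ∃ m ∈ s, A j m = true := by
    intro j s hs hbound
    refine hι j s ?_
    exact Set.mem_iUnion.mpr ⟨k, hs, fun m hm => lt_trans (hbound m hm) hMg⟩
  obtain ⟨m, hmN, hmD, hmA⟩ := hM k p q (N + 1) ι Dt hDt A hhit
  refine ⟨m, ?_, lt_of_lt_of_le (Nat.lt_succ_self N) hmN⟩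
  intro B hB
  have hBT : B ∈ T := h𝒮fin.mem_toFinset.mpr hB
  by_cases hBD : B ∈ D
  · have hBT₁ : B ∈ T₁ := by rw [hT₁, Finset.mem_filter]; exact ⟨hBT, hBD⟩
    simpa [hDtdef] using hmD (T₁.equivFin ⟨B, hBT₁⟩)
  · have hBT₂ : B ∈ T₂ := by rw [hT₂, Finset.mem_filter]; exact ⟨hBT, hBD⟩
    simpa [hAdef] using hmA (T₂.equivFin ⟨B, hBT₂⟩)
end
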